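/- arXiv:2405.14669 — 2 statements merged into one kernel-verified Lean document; each statement's English description precedes it below -/
import Mathlib

section
/- There exists a constant C₁ > 0 (depending on the distribution) such that for all θ, L(f_θ) − L(f_{θ*}) ≤ C₁ (θ − θ*)²: the excess 0-1 risk of the threshold classifier is locally and globally quadratically bounded, since the function h(s) = (∫_{−c}^{c} dF − ∫_{s−c}^{s+c} dF)/s² extends continuously at s = 0 and is bounded on ℝ when F has a bounded, Lipschitz density. -/
/-!
The excess risk `E` is differentiable with derivative `s ↦ (f (s - c) - f (s + c)) / 2`, which
inherits the Lipschitz constant of `f`. Since `E ≥ 0 = E 0`, the point `0` is a minimum, so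
`E' 0 = 0`, and the quadratic upper bound for functions with Lipschitz derivative gives
`E s ≤ K / 2 * s ^ 2`.
-/

open scoped NNReal

theorem le_add_deriv_mul_add_sq_of_lipschitzWith {φ φ' : ℝ → ℝ} {L : ℝ≥0}
    (hφ : ∀ x, HasDerivAt φ (φ' x) x) (hL : LipschitzWith L φ') (a b : ℝ) :
    φ b ≤ φ a + φ' a * (b - a) + L / 2 * (b - a) ^ 2 := by
  set ψ : ℝ → ℝ := fun t ↦ φ a + φ' a * (t - a) + L / 2 * (t - a) ^ 2 - φ t
  have hψ : ∀ t, HasDerivAt ψ (φ' a + L * (t - a) - φ' t) t := fun t ↦ by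
    have hlin := (hasDerivAt_id' t).sub_const a
    refine (((hlin.const_mul (φ' a)).const_add (φ a)).add
      ((hlin.pow 2).const_mul ((L : ℝ) / 2)) |>.sub (hφ t)).congr_deriv ?_
    ring
  have hdev : ∀ t, |φ' t - φ' a| ≤ L * |t - a| := fun t ↦ by
    simpa only [Real.dist_eq] using hL.dist_le_mul t a
  suffices ψ a ≤ ψ b by simpa [ψ] using this
  rcases le_total a b with hab | hba
  · refine monotoneOn_of_hasDerivWithinAt_nonneg (convex_Ici a)
      (fun t _ ↦ (hψ t).continuousAt.continuousWithinAt)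
      (fun t _ ↦ (hψ t).hasDerivWithinAt) (fun t ht ↦ ?_) Set.self_mem_Ici hab hab
    rw [interior_Ici, Set.mem_Ioi] at ht
    have := (abs_le.mp (hdev t)).2
    rw [abs_of_pos (sub_pos.mpr ht)] at this
    linarith
  · refine antitoneOn_of_hasDerivWithinAt_nonpos (convex_Iic a)
      (fun t _ ↦ (hψ t).continuousAt.continuousWithinAt)
      (fun t _ ↦ (hψ t).hasDerivWithinAt) (fun t ht ↦ ?_) hba Set.self_mem_Iic hba
    rw [interior_Iic, Set.mem_Iio] at ht
    have := (abs_le.mp (hdev t)).1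
    rw [abs_of_neg (sub_neg.mpr ht)] at this
    linarith

theorem hasDerivAt_of_sub_eq_intervalIntegral {F f : ℝ → ℝ} (hf : Continuous f)
    (hdf : ∀ a b, F b - F a = ∫ x in a..b, f x) (x : ℝ) : HasDerivAt F (f x) x := by
  have hF : F = fun u ↦ F 0 + ∫ t in (0 : ℝ)..u, f t := by
    funext u
    rw [← hdf]
    ring
  rw [hF]
  exact (hf.integral_hasStrictDerivAt 0 x).hasDerivAt.const_add _

theorem LipschitzWith.half_sub_shift {f : ℝ → ℝ} {K : ℝ≥0} (hf : LipschitzWith K f) (c : ℝ) :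
    LipschitzWith K fun s ↦ (f (s - c) - f (s + c)) / 2 := by
  refine LipschitzWith.of_dist_le_mul fun x y ↦ ?_
  have h₁ := hf.dist_le_mul (x - c) (y - c)
  have h₂ := hf.dist_le_mul (x + c) (y + c)
  simp only [Real.dist_eq] at *
  rw [show x - c - (y - c) = x - y by ring] at h₁
  rw [show x + c - (y + c) = x - y by ring] at h₂
  rw [show (f (x - c) - f (x + c)) / 2 - (f (y - c) - f (y + c)) / 2
      = ((f (x - c) - f (y - c)) - (f (x + c) - f (y + c))) / 2 by ring, abs_div, abs_two]
  linarith [abs_sub (f (x - c) - f (y - c)) (f (x + c) - f (y + c))]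

theorem stmt9_general (F f : ℝ → ℝ) (K c : ℝ)
    (hdf : ∀ a b : ℝ, F b - F a = ∫ x in a..b, f x)
    (hlip : LipschitzWith (Real.toNNReal K) f)
    (E : ℝ → ℝ)
    (hE : ∀ s, E s = ((F c - F (-c)) - (F (s + c) - F (s - c))) / 2)
    (hEnonneg : ∀ s, 0 ≤ E s) :
    ∃ C₁ > 0, ∀ s, E s ≤ C₁ * s ^ 2 := by
  set E' : ℝ → ℝ := fun s ↦ (f (s - c) - f (s + c)) / 2
  have hF := hasDerivAt_of_sub_eq_intervalIntegral hlip.continuous hdf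
  have hE' : ∀ s, HasDerivAt E (E' s) s := fun s ↦ by
    rw [show E = fun s ↦ ((F c - F (-c)) - (F (s + c) - F (s - c))) / 2 from funext hE]
    refine ((((hF (s + c)).comp_add_const s c).sub
      ((hF (s - c)).comp_sub_const s c)).const_sub (F c - F (-c)) |>.div_const 2).congr_deriv ?_
    ring
  have hE0 : E 0 = 0 := by simp [hE]
  have hmin : IsLocalMin E 0 := Filter.Eventually.of_forall fun s ↦ hE0.symm ▸ hEnonneg s
  have hE'0 : E' 0 = 0 := hmin.hasDerivAt_eq_zero (hE' 0)
  refine ⟨K.toNNReal + 1, by positivity, fun s ↦ ?_⟩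
  have := le_add_deriv_mul_add_sq_of_lipschitzWith hE' (hlip.half_sub_shift c) 0 s
  rw [hE0, hE'0] at this
  nlinarith [sq_nonneg s, (K.toNNReal).coe_nonneg]

/-- Quadratic bound on the excess 0-1 risk of the threshold classifier: if `F` has a bounded,
Lipschitz density `f`, `c > 0`, and the (nonnegative) excess risk at standardized offset `s` is
`E(s) = ((F(c)−F(−c)) − (F(s+c)−F(s−c)))/2`, then there is `C₁ > 0` with `E(s) ≤ C₁ s²`
for all `s`. -/
theorem stmt9 (F f : ℝ → ℝ) (M K c : ℝ) (hc : 0 < c)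
    (hdf : ∀ a b : ℝ, F b - F a = ∫ x in a..b, f x)
    (hfpos : ∀ x, 0 ≤ f x)
    (hfb : ∀ x, f x ≤ M)
    (hlip : LipschitzWith (Real.toNNReal K) f)
    (E : ℝ → ℝ)
    (hE : ∀ s, E s = ((F c - F (-c)) - (F (s + c) - F (s - c))) / 2)
    (hEnonneg : ∀ s, 0 ≤ E s) :
    ∃ C₁ > 0, ∀ s, E s ≤ C₁ * s ^ 2 :=
  stmt9_general F f K c hdf hlip E hE hEnonneg
end

section
/- If ℓ: ℝ → [0,1] is 1-Lipschitz, then for any sample S and any function class H, the empirical Rademacher complexity satisfies R_S(ℓ ∘ H) ≤ R_S(H) (Talagrand's contraction lemma applied to 1-Lipschitz ℓ). -/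
/-!
Replace the coordinates of the sample vectors `(h (S i))ᵢ` by their images under `ℓ` one at a
time. For a single coordinate, pairing every sign pattern with the pattern flipped there reduces
the step to `sup (A + ψ ∘ B) + sup (A - ψ ∘ B) ≤ sup (A + B) + sup (A - B)`: for two points `x, y`
the error `ψ (B x) - ψ (B y)` is at most `|B x - B y|`, and the better of the two pairings
`(x, y)`, `(y, x)` on the right gains exactly `|B x - B y|`. Upper bounds on all signed sums
amount to boundedness of the set of sample vectors, and coordinatewise Lipschitz maps preserve it.
-/

open Real

/-- Empirical Rademacher complexity of a class `F` of real-valued functions on a sample `S`. -/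
noncomputable def radComp {Z : Type*} {m : ℕ} (S : Fin m → Z) (F : Set (Z → ℝ)) : ℝ :=
  (1 / (m : ℝ)) * ((1 / 2 ^ m) * ∑ σ : Fin m → Bool,
    sSup ((fun f : Z → ℝ => ∑ i, (if σ i then (1 : ℝ) else -1) * f (S i)) '' F))

open Finset Function Bornology

lemma sSup_add_sSup_le_of_le_max {α : Type*} {T : Set α} {u₁ u₂ v₁ v₂ : α → ℝ}
    (hv₁ : BddAbove (v₁ '' T)) (hv₂ : BddAbove (v₂ '' T))
    (h : ∀ x ∈ T, ∀ y ∈ T, u₁ x + u₂ y ≤ max (v₁ x + v₂ y) (v₁ y + v₂ x)) :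
    sSup (u₁ '' T) + sSup (u₂ '' T) ≤ sSup (v₁ '' T) + sSup (v₂ '' T) := by
  rcases T.eq_empty_or_nonempty with rfl | hT
  · simp
  rw [← le_sub_iff_add_le]
  refine csSup_le (hT.image _) ?_
  rintro _ ⟨x, hx, rfl⟩
  rw [le_sub_iff_add_le', ← le_sub_iff_add_le]
  refine csSup_le (hT.image _) ?_
  rintro _ ⟨y, hy, rfl⟩
  have hmax : max (v₁ x + v₂ y) (v₁ y + v₂ x) ≤ sSup (v₁ '' T) + sSup (v₂ '' T) :=
    max_le
      (add_le_add (le_csSup hv₁ ⟨x, hx, rfl⟩) (le_csSup hv₂ ⟨y, hy, rfl⟩))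
      (add_le_add (le_csSup hv₁ ⟨y, hy, rfl⟩) (le_csSup hv₂ ⟨x, hx, rfl⟩))
  linarith [h x hx y hy]

lemma sum_le_sum_of_add_le_add_comp {α : Type*} [Fintype α] {e : α → α} (he : Involutive e)
    {F G : α → ℝ} (h : ∀ σ, F σ + F (e σ) ≤ G σ + G (e σ)) : ∑ σ, F σ ≤ ∑ σ, G σ := by
  have hsum := Finset.sum_le_sum fun σ (_ : σ ∈ univ) => h σ
  have hF := Equiv.sum_comp (he.toPerm e) F
  have hG := Equiv.sum_comp (he.toPerm e) G
  simp only [Involutive.coe_toPerm, Finset.sum_add_distrib] at hsum hF hG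
  linarith

lemma isBounded_image_piMap {ι : Type*} [Fintype ι] {φ : ι → ℝ → ℝ} {K : NNReal}
    (hφ : ∀ i, LipschitzWith K (φ i)) {T : Set (ι → ℝ)} (hT : IsBounded T) :
    IsBounded (Pi.map φ '' T) := by
  refine forall_isBounded_image_eval_iff.1 fun i => ?_
  have hTi := (hφ i).isBounded_image (forall_isBounded_image_eval_iff.2 hT i)
  rw [Set.image_image] at hTi ⊢
  exact hTi

section SignedSum

variable {ι : Type*} [Fintype ι]

def signedSum (σ : ι → Bool) (x : ι → ℝ) : ℝ :=
  ∑ i, (if σ i then (1 : ℝ) else -1) * x i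

lemma signedSum_update_update [DecidableEq ι] (σ : ι → Bool) (x : ι → ℝ) (a : ι) (b : Bool)
    (t : ℝ) :
    signedSum (update σ a b) (update x a t) =
      signedSum σ x + (if b then 1 else -1) * t - (if σ a then 1 else -1) * x a := by
  have hrest : ∑ i ∈ {a}ᶜ, (if update σ a b i then (1 : ℝ) else -1) * update x a t i =
      ∑ i ∈ {a}ᶜ, (if σ i then (1 : ℝ) else -1) * x i :=
    Finset.sum_congr rfl fun i hi => by
      rw [update_of_ne (by simpa using hi), update_of_ne (by simpa using hi)]
  simp only [signedSum, Fintype.sum_eq_add_sum_compl a, hrest, update_self]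
  ring

lemma signedSum_add_signedSum_eq [DecidableEq ι] (b : Bool) (i : ι) (x : ι → ℝ) :
    signedSum (fun _ => b) x + signedSum (fun j => if j = i then b else !b) x =
      2 * ((if b then 1 else -1) * x i) := by
  rw [signedSum, signedSum, ← Finset.sum_add_distrib, Finset.sum_eq_single i]
  · rw [if_pos rfl]
    ring
  · intro j _ hj
    cases b <;> simp [hj]
  · simp

lemma bddAbove_signedSum_image {T : Set (ι → ℝ)} (hT : IsBounded T) (σ : ι → Bool) :
    BddAbove (signedSum σ '' T) := by
  have hcont : Continuous (signedSum σ) := by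
    unfold signedSum
    fun_prop
  exact (hT.isCompact_closure.bddAbove_image hcont.continuousOn).mono
    (Set.image_mono subset_closure)

/-- `± x i` is the average of two signed sums. -/
lemma isBounded_of_forall_bddAbove_signedSum {T : Set (ι → ℝ)}
    (hT : ∀ σ, BddAbove (signedSum σ '' T)) : IsBounded T := by
  classical
  have hcoord : ∀ (b : Bool) (i : ι),
      BddAbove ((fun x : ι → ℝ => (if b then (1 : ℝ) else -1) * x i) '' T) := by
    intro b i
    obtain ⟨c₁, hc₁⟩ := hT fun _ => b
    obtain ⟨c₂, hc₂⟩ := hT fun j => if j = i then b else !b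
    refine ⟨(c₁ + c₂) / 2, ?_⟩
    rintro _ ⟨x, hx, rfl⟩
    linarith [signedSum_add_signedSum_eq b i x, hc₁ (Set.mem_image_of_mem _ hx),
      hc₂ (Set.mem_image_of_mem _ hx)]
  refine forall_isBounded_image_eval_iff.1 fun i => BddBelow.isBounded ?_ ?_
  · obtain ⟨c, hc⟩ := hcoord false i
    refine ⟨-c, ?_⟩
    rintro _ ⟨x, hx, rfl⟩
    have hcx := hc (Set.mem_image_of_mem _ hx)
    simp only [Bool.false_eq_true, if_false] at hcx
    simp only [eval]
    linarith
  · simpa [Set.image_image] using hcoord true i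

/-- Pair each sign pattern with the one flipped at `a`. -/
lemma sum_sSup_signedSum_image_update_le [DecidableEq ι] {T : Set (ι → ℝ)} (hT : IsBounded T)
    (a : ι) {g : ℝ → ℝ} (hg : LipschitzWith 1 g) :
    ∑ σ, sSup (signedSum σ '' ((fun x => update x a (g (x a))) '' T)) ≤
      ∑ σ, sSup (signedSum σ '' T) := by
  have hflip : Involutive fun σ : ι → Bool => update σ a (!σ a) := fun σ => by simp
  refine sum_le_sum_of_add_le_add_comp hflip fun σ => ?_
  simp only [Set.image_image]
  refine sSup_add_sSup_le_of_le_max (bddAbove_signedSum_image hT _)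
    (bddAbove_signedSum_image hT _) fun x _ y _ => ?_
  have hx := signedSum_update_update σ x a (σ a) (g (x a))
  have hy := signedSum_update_update σ y a (!σ a) (g (y a))
  have hy' := signedSum_update_update σ y a (!σ a) (y a)
  have hx' := signedSum_update_update σ x a (!σ a) (x a)
  rw [update_eq_self] at hx hy' hx'
  have hlip : |g (x a) - g (y a)| ≤ |x a - y a| := by
    simpa [Real.dist_eq] using hg.dist_le_mul (x a) (y a)
  rw [hx, hy, hy', hx']
  cases σ a <;> simp only [Bool.not_true, Bool.not_false, Bool.false_eq_true, if_true, if_false] <;>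
    cases abs_cases (g (x a) - g (y a)) <;> cases abs_cases (x a - y a) <;>
    first
    | exact le_max_of_le_left (by linarith)
    | exact le_max_of_le_right (by linarith)

theorem sum_sSup_signedSum_image_piMap_le [DecidableEq ι] {T : Set (ι → ℝ)} (hT : IsBounded T)
    {φ : ι → ℝ → ℝ} (hφ : ∀ i, LipschitzWith 1 (φ i)) :
    ∑ σ, sSup (signedSum σ '' (Pi.map φ '' T)) ≤ ∑ σ, sSup (signedSum σ '' T) := by
  suffices h : ∀ s : Finset ι,
      ∑ σ, sSup (signedSum σ '' (Pi.map (s.piecewise φ fun _ => id) '' T)) ≤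
        ∑ σ, sSup (signedSum σ '' T) by
    simpa using h univ
  intro s
  induction s using Finset.induction_on with
  | empty => simp
  | insert a s ha ih =>
    have hmap : Pi.map ((insert a s).piecewise φ fun _ => id) =
        (fun x => update x a (φ a (x a))) ∘ Pi.map (s.piecewise φ fun _ => id) := by
      ext x i
      by_cases hi : i = a
      · subst hi
        simp [ha]
      · simp [hi]
    have hbdd : IsBounded (Pi.map (s.piecewise φ fun _ => id) '' T) :=
      isBounded_image_piMap (K := 1) (fun i => by
        by_cases hi : i ∈ s
        · simpa [hi] using hφ i
        · simpa [hi] using LipschitzWith.id) hT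
    rw [hmap, Set.image_comp]
    exact (sum_sSup_signedSum_image_update_le hbdd a (hφ a)).trans ih

end SignedSum

theorem stmt11_general {Z : Type*} {m : ℕ} (S : Fin m → Z) (H : Set (Z → ℝ)) (ℓ : ℝ → ℝ)
    (hℓ : LipschitzWith 1 ℓ)
    (hBdd : ∀ σ : Fin m → Bool,
      BddAbove ((fun h : Z → ℝ => ∑ i, (if σ i then (1 : ℝ) else -1) * h (S i)) '' H)) :
    radComp S ((fun h : Z → ℝ => ℓ ∘ h) '' H) ≤ radComp S H := by
  have hT : IsBounded ((fun h : Z → ℝ => fun i => h (S i)) '' H) :=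
    isBounded_of_forall_bddAbove_signedSum fun σ => by
      rw [Set.image_image]
      exact hBdd σ
  have hcontr := sum_sSup_signedSum_image_piMap_le hT fun _ => hℓ
  unfold radComp
  refine mul_le_mul_of_nonneg_left (mul_le_mul_of_nonneg_left ?_ (by positivity)) (by positivity)
  simp only [Set.image_image] at hcontr ⊢
  exact hcontr

/-- Talagrand's contraction: if `ℓ : ℝ → [0,1]` is 1-Lipschitz, then for any sample `S` and any
class `H`, `R_S(ℓ ∘ H) ≤ R_S(H)`. -/
theorem stmt11 {Z : Type*} {m : ℕ} (S : Fin m → Z) (H : Set (Z → ℝ)) (ℓ : ℝ → ℝ)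
    (hℓ : LipschitzWith 1 ℓ) (hℓb : ∀ r, ℓ r ∈ Set.Icc (0 : ℝ) 1)
    (hBdd : ∀ σ : Fin m → Bool,
      BddAbove ((fun h : Z → ℝ => ∑ i, (if σ i then (1 : ℝ) else -1) * h (S i)) '' H)) :
    radComp S ((fun h : Z → ℝ => ℓ ∘ h) '' H) ≤ radComp S H :=
  stmt11_general S H ℓ hℓ hBdd
end
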